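/- Let $N_n = N_1^{(n)}(\Lambda_n)$, where for each $n$, $N_1^{(n)}$ is a standard Poisson process and $\Lambda_n$ is a nonnegative random variable independent of $N_1^{(n)}$. Let $(k_n)$ be a sequence of positive reals with $k_n \to \infty$. Then $N_n/k_n$ converges in distribution to a law with distribution function $A$ if and only if $\Lambda_n/k_n$ converges in distribution to the same law $A$. -/

import Mathlib

/-!
Conditionally on `Λ_n = r`, the count `N_n` is Poisson with mean and variance `r`, so by
Chebyshev's inequality `N_n - Λ_n` is of order `√Λ_n = o(k_n)` on the scale `k_n`. Hence for
every shift `ε > 0` and tolerance `δ > 0` the distribution functions of `N_n / k_n` and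
`Λ_n / k_n` eventually satisfy the Lévy-metric inequalities
`G(x - ε) - δ ≤ F(x) ≤ G(x + ε) + δ`, a relation that is symmetric and transfers convergence
at the continuity points of the limit law, which are dense.
-/

open MeasureTheory ProbabilityTheory Filter Set
open scoped NNReal ENNReal

noncomputable section

/-- Convergence in distribution, expressed via pointwise convergence of distribution
functions at all continuity points (atoms excluded) of the limit law. -/
def TendstoInDistrib {Ω : Type*} [MeasureSpace Ω] (Y : ℕ → Ω → ℝ) (μ : Measure ℝ) : Prop :=
  ∀ x : ℝ, μ {x} = 0 →
    Tendsto (fun n => (ℙ {ω | Y n ω < x}).toReal) atTop (nhds (μ (Iio x)).toReal)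

open scoped Nat Topology

lemma hasSum_descFactorial_mul_pow_div_factorial (l : ℝ) (m : ℕ) :
    HasSum (fun j : ℕ => (j.descFactorial m : ℝ) * (l ^ j / j !)) (l ^ m * Real.exp l) := by
  rw [← hasSum_nat_add_iff' m, Finset.sum_eq_zero fun j hj => by
    rw [Nat.descFactorial_eq_zero_iff_lt.2 (Finset.mem_range.1 hj), Nat.cast_zero, zero_mul],
    sub_zero]
  have hterm (i : ℕ) :
      ((i + m).descFactorial m : ℝ) * (l ^ (i + m) / (i + m)!) = l ^ m * (l ^ i / i !) := by
    rw [← Nat.factorial_mul_descFactorial (Nat.le_add_left m i), Nat.add_sub_cancel]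
    have : ((i + m).descFactorial m : ℝ) ≠ 0 := by
      exact_mod_cast (Nat.descFactorial_pos.2 (Nat.le_add_left m i)).ne'
    push_cast
    field_simp
    ring
  simp_rw [hterm, Real.exp_eq_exp_ℝ]
  exact (NormedSpace.expSeries_div_hasSum_exp l).mul_left _

namespace ProbabilityTheory

/-- Expand `(j - r)² = j(j - 1) + j - 2rj + r²` in falling factorials; the `m`-th factorial
moment of `Po(r)` is `r ^ m`. -/
lemma hasSum_poisson_mul_sq_sub (r : ℝ≥0) :
    HasSum (fun j : ℕ => Real.exp (-r) * r ^ j / j ! * ((j : ℝ) - r) ^ 2) r := by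
  have H := hasSum_descFactorial_mul_pow_div_factorial r
  have h := (((H 2).add (H 1)).sub ((H 1).mul_left (2 * (r : ℝ)))).add
    ((H 0).mul_left ((r : ℝ) ^ 2))
  have hval : Real.exp (-r) * ((r : ℝ) ^ 2 * Real.exp r + r ^ 1 * Real.exp r
      - 2 * r * (r ^ 1 * Real.exp r) + r ^ 2 * (r ^ 0 * Real.exp r)) = r := by
    rw [← mul_right_inj' (Real.exp_pos r).ne', ← mul_assoc, ← Real.exp_add]
    simp
    ring
  have h' := h.mul_left (Real.exp (-r))
  rw [hval] at h'
  refine h'.congr_fun fun j => ?_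
  simp only [Nat.cast_descFactorial_two, Nat.descFactorial_one, Nat.descFactorial_zero]
  ring

lemma poissonMeasure_real_le_of_le_abs_sub (r : ℝ≥0) {t : ℝ} (ht : 0 < t) {s : Set ℕ}
    (hs : ∀ j ∈ s, t ≤ |(j : ℝ) - r|) : Po(r).real s ≤ r / t ^ 2 := by
  have hvar := hasSum_poisson_mul_sq_sub r
  have hint : Integrable (fun j : ℕ => ((j : ℝ) - r) ^ 2) Po(r) :=
    integrable_poissonMeasure_iff.2 (by simpa only [Real.norm_eq_abs, abs_sq] using hvar.summable)
  have hmarkov := mul_meas_ge_le_integral_of_nonneg (ae_of_all _ fun j => sq_nonneg _) hint (t ^ 2)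
  simp only [integral_poissonMeasure, smul_eq_mul, hvar.tsum_eq] at hmarkov
  rw [le_div_iff₀ (by positivity), mul_comm]
  refine (mul_le_mul_of_nonneg_left (measureReal_mono fun j hj => ?_) (sq_nonneg t)).trans hmarkov
  simpa only [mem_ofPred_eq, sq_abs] using pow_le_pow_left₀ ht.le (hs j hj) 2

lemma poissonMeasure_real_Iio_le (r : ℝ≥0) {M : ℕ} {t : ℝ} (ht : 0 < t) (h : M + t ≤ r) :
    Po(r).real (Iio M) ≤ (M + t) / t ^ 2 := by
  have hrM : 0 < (r : ℝ) - M := by linarith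
  refine (poissonMeasure_real_le_of_le_abs_sub r hrM fun j hj => ?_).trans ?_
  · rw [abs_sub_comm]
    exact (sub_le_sub_left (Nat.cast_le.2 (le_of_lt hj)) _).trans (le_abs_self _)
  · -- `r / (r - M) ^ 2` decreases in `r > M`
    rw [div_le_div_iff₀ (by positivity) (by positivity)]
    have hts : t ≤ r - M := by linarith
    nlinarith [mul_le_mul_of_nonneg_left (pow_le_pow_left₀ ht.le hts 2) (Nat.cast_nonneg' M),
      mul_nonneg (mul_pos ht hrM).le (sub_nonneg.2 hts)]

lemma poissonMeasure_real_Ici_le (r : ℝ≥0) {M : ℕ} {t : ℝ} (ht : 0 < t) (h : r + t ≤ M) :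
    Po(r).real (Ici M) ≤ r / t ^ 2 :=
  poissonMeasure_real_le_of_le_abs_sub r ht fun j hj => by
    have : (M : ℝ) ≤ j := Nat.cast_le.2 hj
    exact le_abs.2 (Or.inl (by linarith))

lemma measurable_poissonMeasure_real_finset (s : Finset ℕ) :
    Measurable fun r : ℝ≥0 => Po(r).real s := by
  simp_rw [← sum_measureReal_singleton, poissonMeasure_real_singleton]
  fun_prop

lemma continuousAt_cdf (A : Measure ℝ) [IsProbabilityMeasure A] {x : ℝ} (hx : A {x} = 0) :
    ContinuousAt (cdf A) x := by
  refine continuousAt_iff_continuous_left_right.2 ⟨continuousWithinAt_Iio_iff_Iic.1 <|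
    (monotone_cdf A).continuousWithinAt_Iio_iff_leftLim_eq.2 ?_, (cdf A).right_continuous x⟩
  have hjump := (cdf A).measure_singleton x
  rw [measure_cdf, hx, eq_comm, ENNReal.ofReal_eq_zero, sub_nonpos] at hjump
  exact le_antisymm ((monotone_cdf A).leftLim_le le_rfl) hjump

lemma measureReal_Iio_eq_cdf (A : Measure ℝ) [IsProbabilityMeasure A] {x : ℝ} (hx : A {x} = 0) :
    A.real (Iio x) = cdf A x := by
  rw [cdf_eq_real, measureReal_def, measureReal_def, ← Iic_sdiff_right, measure_sdiff_null hx]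

lemma dense_setOf_measure_singleton_eq_zero (A : Measure ℝ) [SFinite A] :
    Dense {x : ℝ | A {x} = 0} := by
  convert (Measure.countable_meas_level_set_pos (μ := A) measurable_id).dense_compl ℝ using 1
  ext x
  simp [pos_iff_ne_zero]

end ProbabilityTheory

namespace MeasureTheory

variable {Ω : Type*} [MeasurableSpace Ω] {μ : Measure Ω}

lemma measureReal_setOf_lt_eq_zero {f : Ω → ℝ} (hf : ∀ ω, 0 ≤ f ω) {x : ℝ} (hx : x ≤ 0) :
    μ.real {ω | f ω < x} = 0 := by
  have : {ω | f ω < x} = ∅ := by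
    ext ω
    simpa using hx.trans (hf ω)
  rw [this, measureReal_empty]

variable [IsProbabilityMeasure μ]

lemma integral_le_measureReal_add {f : Ω → ℝ} (hf : Integrable f μ) {S : Set Ω}
    (hS : MeasurableSet S) {c : ℝ} (h : ∀ ω, f ω ≤ S.indicator 1 ω + c) :
    ∫ ω, f ω ∂μ ≤ μ.real S + c := by
  have hI : Integrable (S.indicator (1 : Ω → ℝ)) μ := (integrable_const 1).indicator hS
  calc ∫ ω, f ω ∂μ ≤ ∫ ω, (S.indicator 1 ω + c) ∂μ :=
        integral_mono hf (hI.add (integrable_const c)) h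
    _ = μ.real S + c := by
        rw [integral_add hI (integrable_const c), integral_indicator_one hS]
        simp

lemma measureReal_sub_le_integral {f : Ω → ℝ} (hf : Integrable f μ) {S : Set Ω}
    (hS : MeasurableSet S) {c : ℝ} (h : ∀ ω, S.indicator 1 ω - c ≤ f ω) :
    μ.real S - c ≤ ∫ ω, f ω ∂μ := by
  have hI : Integrable (S.indicator (1 : Ω → ℝ)) μ := (integrable_const 1).indicator hS
  calc μ.real S - c = ∫ ω, (S.indicator 1 ω - c) ∂μ := by
        rw [integral_sub hI (integrable_const c), integral_indicator_one hS]
        simp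
    _ ≤ ∫ ω, f ω ∂μ :=
        integral_mono (hI.sub (integrable_const c)) hf h

end MeasureTheory

/-- The inequalities defining the Lévy distance between distribution functions, required
pointwise and only for large `n`. -/
def LevyApprox (F G : ℕ → ℝ → ℝ) : Prop :=
  ∀ x ε δ : ℝ, 0 < ε → 0 < δ →
    ∀ᶠ n in atTop, F n x ∈ Icc (G n (x - ε) - δ) (G n (x + ε) + δ)

namespace LevyApprox

variable {F G : ℕ → ℝ → ℝ}

lemma symm (h : LevyApprox F G) : LevyApprox G F := by
  intro x ε δ hε hδ
  filter_upwards [h (x + ε) ε δ hε hδ, h (x - ε) ε δ hε hδ] with n hplus hminus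
  rw [add_sub_cancel_right] at hplus
  rw [sub_add_cancel] at hminus
  constructor <;> linarith [hplus.1, hminus.2]

lemma tendsto {S : Set ℝ} (hS : Dense S) {Φ : ℝ → ℝ}
    (hG : ∀ y ∈ S, Tendsto (G · y) atTop (𝓝 (Φ y))) (h : LevyApprox F G) {x : ℝ}
    (hx : ContinuousAt Φ x) : Tendsto (F · x) atTop (𝓝 (Φ x)) := by
  rw [tendsto_order]
  constructor
  · intro a ha
    obtain ⟨c, hac, hc⟩ := exists_between ha
    obtain ⟨l, hl, hlΦ⟩ := exists_Ioc_subset_of_mem_nhds (hx.preimage_mem_nhds (Ioi_mem_nhds hc))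
      ⟨x - 1, by linarith⟩
    obtain ⟨y, hyS, hly, hyx⟩ := hS.exists_between hl
    filter_upwards [(hG y hyS).eventually (lt_mem_nhds (hlΦ ⟨hly, hyx.le⟩)),
      h x (x - y) (c - a) (by linarith) (by linarith)] with n hGn hFn
    rw [sub_sub_cancel] at hFn
    linarith [hFn.1]
  · intro b hb
    obtain ⟨c, hc, hcb⟩ := exists_between hb
    obtain ⟨u, hu, huΦ⟩ := exists_Ico_subset_of_mem_nhds (hx.preimage_mem_nhds (Iio_mem_nhds hc))
      ⟨x + 1, by linarith⟩
    obtain ⟨z, hzS, hxz, hzu⟩ := hS.exists_between hu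
    filter_upwards [(hG z hzS).eventually (gt_mem_nhds (huΦ ⟨hxz.le, hzu⟩)),
      h x (z - x) (b - c) (by linarith) (by linarith)] with n hGn hFn
    rw [add_sub_cancel] at hFn
    linarith [hFn.2]

end LevyApprox

lemma TendstoInDistrib.of_levyApprox {Ω : Type*} [MeasureSpace Ω] {Y Z : ℕ → Ω → ℝ}
    {A : Measure ℝ} [IsProbabilityMeasure A] (hZ : TendstoInDistrib Z A)
    (h : LevyApprox (fun n x => (ℙ : Measure Ω).real {ω | Y n ω < x})
      (fun n x => (ℙ : Measure Ω).real {ω | Z n ω < x})) :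
    TendstoInDistrib Y A := by
  intro x hx
  have := h.tendsto (dense_setOf_measure_singleton_eq_zero A) (Φ := cdf A)
    (fun y hy => by rw [← measureReal_Iio_eq_cdf A hy]; exact hZ y hy) (continuousAt_cdf A hx)
  rwa [← measureReal_Iio_eq_cdf A hx] at this

namespace ProbabilityTheory

section MixedPoisson

variable {Ω : Type*} [MeasurableSpace Ω] {μ : Measure Ω} {N : Ω → ℕ} {L : Ω → ℝ≥0}

variable (μ) in
/-- `N` is mixed Poisson directed by `L`: given `L = r`, it is `Po(r)`-distributed. -/
def IsMixedPoisson (N : Ω → ℕ) (L : Ω → ℝ≥0) : Prop :=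
  ∀ j : ℕ, μ.real {ω | N ω = j} = ∫ ω, Po(L ω).real {j} ∂μ

lemma integrable_poissonMeasure_real_finset [IsFiniteMeasure μ] (hL : Measurable L)
    (s : Finset ℕ) : Integrable (fun ω => Po(L ω).real s) μ :=
  .of_bound ((measurable_poissonMeasure_real_finset s).comp hL).aestronglyMeasurable 1 <|
    ae_of_all _ fun _ => by
      rw [Real.norm_of_nonneg measureReal_nonneg]
      exact measureReal_le_one

lemma IsMixedPoisson.measureReal_mem_finset [IsFiniteMeasure μ] (h : IsMixedPoisson μ N L)
    (hN : Measurable N) (hL : Measurable L) (s : Finset ℕ) :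
    μ.real {ω | N ω ∈ s} = ∫ ω, Po(L ω).real s ∂μ := by
  have hset : {ω | N ω ∈ s} = ⋃ j ∈ s, N ⁻¹' {j} := by ext; simp
  rw [hset, measureReal_biUnion_finset (pairwiseDisjoint_fiber N _)
    fun j _ => hN (measurableSet_singleton j)]
  calc ∑ j ∈ s, μ.real (N ⁻¹' {j}) = ∑ j ∈ s, ∫ ω, Po(L ω).real {j} ∂μ :=
        Finset.sum_congr rfl fun j _ => h j
    _ = ∫ ω, Po(L ω).real s ∂μ := by
        rw [← integral_finsetSum _ fun j _ => by
          simpa using integrable_poissonMeasure_real_finset (μ := μ) hL {j}]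
        simp_rw [sum_measureReal_singleton]

lemma IsMixedPoisson.measureReal_lt [IsFiniteMeasure μ] (h : IsMixedPoisson μ N L)
    (hN : Measurable N) (hL : Measurable L) (M : ℕ) :
    μ.real {ω | N ω < M} = ∫ ω, Po(L ω).real (Iio M) ∂μ := by
  simpa using h.measureReal_mem_finset hN hL (Finset.range M)

variable [IsProbabilityMeasure μ]

lemma IsMixedPoisson.measureReal_lt_le (h : IsMixedPoisson μ N L) (hN : Measurable N)
    (hL : Measurable L) (M : ℕ) {t : ℝ} (ht : 0 < t) :
    μ.real {ω | N ω < M} ≤ μ.real {ω | (L ω : ℝ) < M + t} + (M + t) / t ^ 2 := by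
  rw [h.measureReal_lt hN hL]
  have hint : Integrable (fun ω => Po(L ω).real (Iio M)) μ := by
    simpa using integrable_poissonMeasure_real_finset hL (Finset.range M)
  refine integral_le_measureReal_add hint (measurableSet_lt (by fun_prop) measurable_const)
    fun ω => ?_
  simp only [indicator_apply, mem_ofPred_eq, Pi.one_apply]
  split_ifs with hω
  · have : 0 ≤ (M + t) / t ^ 2 := by positivity
    linarith [measureReal_le_one (μ := Po(L ω)) (s := Iio M)]
  · rw [zero_add]
    exact poissonMeasure_real_Iio_le _ ht (not_lt.1 hω)

lemma IsMixedPoisson.measureReal_sub_le_lt (h : IsMixedPoisson μ N L) (hN : Measurable N)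
    (hL : Measurable L) (M : ℕ) {t : ℝ} (ht : 0 < t) :
    μ.real {ω | (L ω : ℝ) ≤ M - t} - M / t ^ 2 ≤ μ.real {ω | N ω < M} := by
  rw [h.measureReal_lt hN hL]
  have hint : Integrable (fun ω => Po(L ω).real (Iio M)) μ := by
    simpa using integrable_poissonMeasure_real_finset hL (Finset.range M)
  refine measureReal_sub_le_integral hint (measurableSet_le (by fun_prop) measurable_const)
    fun ω => ?_
  simp only [indicator_apply, mem_ofPred_eq, Pi.one_apply]
  split_ifs with hω
  · rw [← compl_Ici, probReal_compl_eq_one_sub measurableSet_Ici]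
    have := poissonMeasure_real_Ici_le (L ω) ht (by linarith)
    have : (L ω : ℝ) / t ^ 2 ≤ M / t ^ 2 := by gcongr; linarith
    linarith
  · rw [zero_sub]
    have : 0 ≤ (M : ℝ) / t ^ 2 := by positivity
    linarith [measureReal_nonneg (μ := Po(L ω)) (s := Iio M)]

lemma IsMixedPoisson.measureReal_div_lt_mem_Icc (h : IsMixedPoisson μ N L)
    (hN : Measurable N) (hL : Measurable L) {k x ε : ℝ} (hk : 0 < k) (hx : 0 < x)
    (hεk : 2 ≤ ε * k) :
    μ.real {ω | (N ω : ℝ) / k < x} ∈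
      Icc (μ.real {ω | (L ω : ℝ) / k < x - ε} - 4 * (x + ε) / ε ^ 2 / k)
        (μ.real {ω | (L ω : ℝ) / k < x + ε} + 4 * (x + ε) / ε ^ 2 / k) := by
  have hε : 0 < ε := pos_of_mul_pos_left (by linarith) hk.le
  -- With `M = ⌈x k⌉₊` and `t = ε k / 2`, both Chebyshev errors are at most
  -- `(M + t) / t ^ 2 ≤ (x + ε) k / t ^ 2 = 4 (x + ε) / (ε ^ 2 k)`.
  set M := ⌈x * k⌉₊
  set t := ε * k / 2
  have ht : 0 < t := by positivity
  have htk : 2 * t = ε * k := by ring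
  have hMlo : x * k ≤ M := Nat.le_ceil _
  have hMhi : (M : ℝ) ≤ x * k + t := by
    linarith [Nat.ceil_lt_add_one (mul_pos hx hk).le]
  have hset : {ω | (N ω : ℝ) / k < x} = {ω | N ω < M} := by
    ext ω
    simp only [mem_ofPred_eq, div_lt_iff₀ hk, M, Nat.lt_ceil]
  have herr : (M + t) / t ^ 2 ≤ 4 * (x + ε) / ε ^ 2 / k :=
    calc (M + t) / t ^ 2 ≤ (x + ε) * k / t ^ 2 := by gcongr; linarith
      _ = 4 * (x + ε) / ε ^ 2 / k := by field_simp; ring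
  have herr' : M / t ^ 2 ≤ (M + t) / t ^ 2 := by gcongr; linarith
  rw [hset]
  constructor
  · have hmono : μ.real {ω | (L ω : ℝ) / k < x - ε} ≤ μ.real {ω | (L ω : ℝ) ≤ M - t} :=
      measureReal_mono fun ω hω => by
        rw [mem_ofPred_eq, div_lt_iff₀ hk] at hω
        rw [mem_ofPred_eq]
        linarith
    linarith [h.measureReal_sub_le_lt hN hL M ht]
  · have hmono : μ.real {ω | (L ω : ℝ) < M + t} ≤ μ.real {ω | (L ω : ℝ) / k < x + ε} :=
      measureReal_mono fun ω hω => by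
        rw [mem_ofPred_eq] at hω
        rw [mem_ofPred_eq, div_lt_iff₀ hk]
        linarith
    linarith [h.measureReal_lt_le hN hL M ht]

end MixedPoisson

lemma levyApprox_of_isMixedPoisson {Ω : Type*} [MeasurableSpace Ω] {μ : Measure Ω}
    [IsProbabilityMeasure μ] {N : ℕ → Ω → ℕ} {L : ℕ → Ω → ℝ≥0} {k : ℕ → ℝ}
    (h : ∀ n, IsMixedPoisson μ (N n) (L n)) (hN : ∀ n, Measurable (N n))
    (hL : ∀ n, Measurable (L n)) (hk : ∀ n, 0 < k n) (hkinf : Tendsto k atTop atTop) :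
    LevyApprox (fun n x => μ.real {ω | (N n ω : ℝ) / k n < x})
      (fun n x => μ.real {ω | (L n ω : ℝ) / k n < x}) := by
  intro x ε δ hε hδ
  rcases le_or_gt x 0 with hx | hx
  · refine Eventually.of_forall fun n => ?_
    dsimp only
    rw [mem_Icc, measureReal_setOf_lt_eq_zero (fun ω => by have := hk n; positivity) hx,
      measureReal_setOf_lt_eq_zero (fun ω => by have := hk n; positivity) (by linarith)]
    exact ⟨by linarith, add_nonneg measureReal_nonneg hδ.le⟩
  · filter_upwards [hkinf.eventually_ge_atTop (2 / ε),
      (tendsto_const_nhds.div_atTop hkinf).eventually (gt_mem_nhds hδ)] with n hkn herr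
    have hεk : 2 ≤ ε * k n := by rwa [div_le_iff₀ hε, mul_comm] at hkn
    have hbounds := (h n).measureReal_div_lt_mem_Icc (hN n) (hL n) (hk n) hx hεk
    exact ⟨(sub_le_sub_left herr.le _).trans hbounds.1,
      hbounds.2.trans (add_le_add_right herr.le _)⟩

end ProbabilityTheory

/-- for mixed Poisson random variables `N_n` directed by `Λ_n` and any
sequence `k_n → ∞` of positive reals, `N_n/k_n` converges in distribution to a law `A`
if and only if `Λ_n/k_n` converges in distribution to `A`. -/
theorem stmt8 {Ω : Type*} [MeasureSpace Ω] [IsProbabilityMeasure (ℙ : Measure Ω)]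
    (N : ℕ → Ω → ℕ) (Λ : ℕ → Ω → ℝ) (k : ℕ → ℝ)
    (hNmeas : ∀ n, Measurable (N n)) (hΛmeas : ∀ n, Measurable (Λ n))
    (hk : ∀ n, 0 < k n) (hkinf : Tendsto k atTop atTop)
    (hΛnn : ∀ n ω, 0 ≤ Λ n ω)
    (hmixed : ∀ (n : ℕ) (j : ℕ), (ℙ {ω | N n ω = j}).toReal
      = ∫ ω, Real.exp (-(Λ n ω)) * Λ n ω ^ j / (Nat.factorial j))
    (A : Measure ℝ) [IsProbabilityMeasure A] :
    TendstoInDistrib (fun n ω => (N n ω : ℝ) / k n) A ↔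
    TendstoInDistrib (fun n ω => Λ n ω / k n) A := by
  let L : ℕ → Ω → ℝ≥0 := fun n ω => ⟨Λ n ω, hΛnn n ω⟩
  have hmix (n : ℕ) : IsMixedPoisson ℙ (N n) (L n) := fun j => by
    simp_rw [poissonMeasure_real_singleton]
    exact hmixed n j
  have hL := levyApprox_of_isMixedPoisson hmix hNmeas (fun n => (hΛmeas n).subtype_mk) hk hkinf
  exact ⟨fun h => h.of_levyApprox hL.symm, fun h => h.of_levyApprox hL⟩

end
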